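/- Let d ≥ 3, let e₁ = (1,0,…,0) ∈ ℝ^d, c_k = 2^k e₁, and C_k = Q(c_k, 1/(2k)). Define the potential 𝒱(x) = Σ_{k=2}^∞ k² χ_{C_k}(x). Then 𝒱 satisfies the global Kato condition (S): sup_{x ∈ ℝ^d} ∫_{ℝ^d} 𝒱(y) |x − y|^{2−d} dy < ∞. -/

import Mathlib

/-!
Split `∫_{C_k} |x - y|^{2-d} dy` at the ball `B(x, 1/k)`. By scaling, the part inside the ball is
`k⁻²` times the integral of `|y|^{2-d}` over the unit ball, finite because `2 - d > -d`; outside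
the ball the kernel is at most `k^{d-2}` and `|C_k| = k^{-d}`. Hence every cube contributes at most
a constant to the potential at `x`, uniformly in `x`. A cube at distance `≥ 2^k/4` from `x`
contributes at most `k² k^{-d} (2^k/4)^{2-d} ≤ 4 · 2^{-k}`, and since the cubes sit near `2^k e₁`,
at most one of them is closer to `x` than that.
-/

open MeasureTheory
open scoped ENNReal

noncomputable section

/-- `ℝ^d` as a Euclidean space. -/
abbrev Rd (d : ℕ) := EuclideanSpace ℝ (Fin d)

/-- The open cube `Q(c,r) = {y : max_i |c_i - y_i| < r}`. -/
def cubeSet {d : ℕ} (c : Rd d) (r : ℝ) : Set (Rd d) := {y | ∀ i, |c i - y i| < r}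

/-- The first standard basis vector `e₁ = (1,0,…,0)`. -/
def e1 (d : ℕ) [NeZero d] : Rd d := EuclideanSpace.single 0 1

/-- The cube `C_k = Q(2^k e₁, 1/(2k))`. -/
def Ck (d : ℕ) [NeZero d] (k : ℕ) : Set (Rd d) :=
  cubeSet ((2 : ℝ) ^ k • e1 d) (1 / (2 * k))

/-- The potential `𝒱(x) = ∑_{k=2}^∞ k² χ_{C_k}(x)`. -/
def potV (d : ℕ) [NeZero d] (x : Rd d) : ℝ :=
  ∑' k : ℕ, if 2 ≤ k then ((k : ℝ) ^ 2) * (Ck d k).indicator (fun _ => (1 : ℝ)) x else 0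

open Metric Module

theorem ENNReal.ofReal_tsum_le_tsum_ofReal {α : Type*} {f : α → ℝ} (hf : ∀ a, 0 ≤ f a) :
    ENNReal.ofReal (∑' a, f a) ≤ ∑' a, ENNReal.ofReal (f a) := by
  by_cases h : Summable f
  · exact (ENNReal.ofReal_tsum_of_nonneg hf h).le
  · simp [tsum_eq_zero_of_not_summable h]

theorem ENNReal.tsum_indicator_const_le_of_subsingleton {α : Type*} {s : Set α}
    (hs : s.Subsingleton) (c : ℝ≥0∞) : ∑' a, s.indicator (fun _ => c) a ≤ c := by
  rcases hs.eq_empty_or_singleton with rfl | ⟨m, rfl⟩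
  · simp
  · rw [← tsum_subtype, tsum_singleton (f := fun _ => c)]

section NormRpowKernel

variable {E : Type*} [NormedAddCommGroup E] [MeasurableSpace E] (μ : Measure E)

theorem setLIntegral_norm_sub_rpow_le_of_le_norm (x : E) {A : Set E} {ρ s : ℝ} (hρ : 0 < ρ)
    (hs : s ≤ 0) (hA : ∀ y ∈ A, ρ ≤ ‖x - y‖) :
    ∫⁻ y in A, ENNReal.ofReal (‖x - y‖ ^ s) ∂μ ≤ ENNReal.ofReal (ρ ^ s) * μ A := by
  calc ∫⁻ y in A, ENNReal.ofReal (‖x - y‖ ^ s) ∂μ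
      ≤ ∫⁻ _ in A, ENNReal.ofReal (ρ ^ s) ∂μ := setLIntegral_mono measurable_const fun y hy =>
        ENNReal.ofReal_le_ofReal (Real.rpow_le_rpow_of_nonpos hρ (hA y hy) hs)
    _ = ENNReal.ofReal (ρ ^ s) * μ A := setLIntegral_const _ _

theorem setLIntegral_norm_sub_rpow_le (x : E) (A : Set E) {ρ s : ℝ} (hρ : 0 < ρ) (hs : s ≤ 0) :
    ∫⁻ y in A, ENNReal.ofReal (‖x - y‖ ^ s) ∂μ ≤
      ∫⁻ y in ball x ρ, ENNReal.ofReal (‖x - y‖ ^ s) ∂μ + ENNReal.ofReal (ρ ^ s) * μ A := by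
  have hfar : ∀ y ∈ A \ ball x ρ, ρ ≤ ‖x - y‖ := fun y hy => by
    simpa [dist_eq_norm'] using hy.2
  calc ∫⁻ y in A, ENNReal.ofReal (‖x - y‖ ^ s) ∂μ
      ≤ ∫⁻ y in ball x ρ ∪ A \ ball x ρ, ENNReal.ofReal (‖x - y‖ ^ s) ∂μ :=
        lintegral_mono_set (by simp)
    _ ≤ _ := lintegral_union_le _ _ _
    _ ≤ _ := by
        gcongr
        exact (setLIntegral_norm_sub_rpow_le_of_le_norm μ x hρ hs hfar).trans
          (by gcongr; exact Set.sdiff_subset)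

variable [NormedSpace ℝ E] [FiniteDimensional ℝ E] [BorelSpace E] [μ.IsAddHaarMeasure]

theorem setLIntegral_ball_comp_sub_left (f : E → ℝ≥0∞) (x : E) (ρ : ℝ) :
    ∫⁻ y in ball x ρ, f (x - y) ∂μ = ∫⁻ y in ball 0 ρ, f y ∂μ := by
  have hball : ball x ρ = (x - ·) ⁻¹' ball 0 ρ := by ext; simp [dist_eq_norm, norm_sub_rev]
  rw [← lintegral_indicator measurableSet_ball, ← lintegral_indicator measurableSet_ball,
    ← lintegral_sub_left_eq_self ((ball 0 ρ).indicator f) x, hball]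
  exact lintegral_congr fun y => Set.indicator_comp_right (g := f) (x - ·)

theorem setLIntegral_ball_norm_rpow_lt_top (hE : 1 ≤ finrank ℝ E) {s : ℝ}
    (hs : -(finrank ℝ E : ℝ) < s) :
    ∫⁻ y in ball (0 : E) 1, ENNReal.ofReal (‖y‖ ^ s) ∂μ < ⊤ := by
  have hint : IntegrableOn (fun y : E => ‖y‖ ^ s) (ball 0 1) μ :=
    integrableOn_ball_of_norm_le_rpow hE (C := 1) (α := -s) (by linarith)
      (.of_forall fun y => by simp [abs_of_nonneg (Real.rpow_nonneg (norm_nonneg y) s)])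
      (measurable_norm.pow_const s).aestronglyMeasurable
  exact hint.lintegral_lt_top

theorem setLIntegral_ball_zero_norm_rpow {ρ : ℝ} (hρ : 0 < ρ) (s : ℝ) :
    ∫⁻ y in ball (0 : E) ρ, ENNReal.ofReal (‖y‖ ^ s) ∂μ =
      ENNReal.ofReal (ρ ^ (s + finrank ℝ E)) *
        ∫⁻ y in ball (0 : E) 1, ENNReal.ofReal (‖y‖ ^ s) ∂μ := by
  set F : E → ℝ≥0∞ := fun y => ENNReal.ofReal (‖y‖ ^ s)
  have hF : Measurable F := (measurable_norm.pow_const s).ennreal_ofReal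
  have hdilate : ∫⁻ z, (ball 0 ρ).indicator F (ρ • z) ∂μ =
      ENNReal.ofReal (ρ ^ finrank ℝ E)⁻¹ * ∫⁻ y in ball 0 ρ, F y ∂μ := by
    rw [← lintegral_indicator measurableSet_ball, ← smul_eq_mul, ← lintegral_smul_measure,
      ← lintegral_map (hF.indicator measurableSet_ball) (measurable_const_smul ρ),
      Measure.map_addHaar_smul μ hρ.ne', abs_of_pos (by positivity)]
  have hhomog : ∀ z, (ball 0 ρ).indicator F (ρ • z) =
      ENNReal.ofReal (ρ ^ s) * (ball 0 1).indicator F z := by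
    intro z
    have hmem : ρ • z ∈ ball (0 : E) ρ ↔ z ∈ ball (0 : E) 1 := by
      simp [norm_smul, abs_of_pos hρ, hρ]
    by_cases hz : z ∈ ball (0 : E) 1
    · rw [Set.indicator_of_mem (hmem.2 hz), Set.indicator_of_mem hz]
      simp only [F, norm_smul, Real.norm_of_nonneg hρ.le, Real.mul_rpow hρ.le (norm_nonneg z),
        ENNReal.ofReal_mul (Real.rpow_nonneg hρ.le s)]
    · rw [Set.indicator_of_notMem (mt hmem.1 hz), Set.indicator_of_notMem hz, mul_zero]
  have hρn : ENNReal.ofReal (ρ ^ finrank ℝ E) * ENNReal.ofReal (ρ ^ finrank ℝ E)⁻¹ = 1 := by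
    rw [← ENNReal.ofReal_mul (by positivity), mul_inv_cancel₀ (by positivity), ENNReal.ofReal_one]
  calc ∫⁻ y in ball 0 ρ, F y ∂μ
      = ENNReal.ofReal (ρ ^ finrank ℝ E) *
          (ENNReal.ofReal (ρ ^ finrank ℝ E)⁻¹ * ∫⁻ y in ball 0 ρ, F y ∂μ) := by
        rw [← mul_assoc, hρn, one_mul]
    _ = ENNReal.ofReal (ρ ^ finrank ℝ E) * (ENNReal.ofReal (ρ ^ s) * ∫⁻ y in ball 0 1, F y ∂μ) := by
        rw [← hdilate, lintegral_congr hhomog,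
          lintegral_const_mul _ (hF.indicator measurableSet_ball),
          lintegral_indicator measurableSet_ball]
    _ = _ := by
        rw [← mul_assoc, ← ENNReal.ofReal_mul (by positivity), Real.rpow_add hρ, Real.rpow_natCast,
          mul_comm (ρ ^ s)]

end NormRpowKernel

section Cubes

variable {d : ℕ}

theorem cubeSet_eq_preimage (c : Rd d) (r : ℝ) :
    cubeSet c r = (MeasurableEquiv.toLp 2 (Fin d → ℝ)).symm ⁻¹'
      Set.univ.pi fun i => Set.Ioo (c i - r) (c i + r) := by
  ext y
  simp only [cubeSet, Set.mem_ofPred_eq, Set.mem_preimage, Set.mem_pi, Set.mem_univ,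
    true_implies, Set.mem_Ioo, MeasurableEquiv.coe_toLp_symm, abs_sub_lt_iff]
  exact forall_congr' fun i => by constructor <;> rintro ⟨h1, h2⟩ <;> constructor <;> linarith

theorem measurableSet_cubeSet (c : Rd d) (r : ℝ) : MeasurableSet (cubeSet c r) := by
  rw [cubeSet_eq_preimage]
  exact (MeasurableEquiv.toLp 2 (Fin d → ℝ)).symm.measurable
    (MeasurableSet.univ_pi fun _ => measurableSet_Ioo)

theorem volume_cubeSet (c : Rd d) {r : ℝ} (hr : 0 ≤ r) :
    volume (cubeSet c r) = ENNReal.ofReal ((2 * r) ^ d) := by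
  rw [cubeSet_eq_preimage,
    (EuclideanSpace.volume_preserving_symm_measurableEquiv_toLp (Fin d)).measure_preimage
      (MeasurableSet.univ_pi fun _ => measurableSet_Ioo).nullMeasurableSet,
    volume_pi_pi, ENNReal.ofReal_pow (by positivity)]
  simp only [Real.volume_Ioo, add_sub_sub_cancel, ← two_mul, Finset.prod_const, Finset.card_univ,
    Fintype.card_fin]

variable [NeZero d]

theorem volume_Ck (k : ℕ) : volume (Ck d k) = ENNReal.ofReal ((k : ℝ)⁻¹ ^ d) := by
  rw [Ck, volume_cubeSet _ (by positivity), one_div, mul_inv, ← mul_assoc,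
    mul_inv_cancel₀ two_ne_zero, one_mul]

theorem abs_sub_apply_zero_lt_of_mem_Ck {k : ℕ} {y : Rd d} (hy : y ∈ Ck d k) :
    |2 ^ k - y 0| < 1 / (2 * k) := by
  simpa [e1] using hy 0

end Cubes

section Potential

variable {d : ℕ} [NeZero d]

def nearCubes (x : Rd d) : Set ℕ := {k | 2 ≤ k ∧ ∃ y ∈ Ck d k, ‖x - y‖ < 2 ^ k / 4}

-- The first coordinates of points of `C_k` and `C_k'` differ by about `2^k' - 2^k ≥ 2^k' / 2`,
-- more than the `2^k / 4 + 2^k' / 4` allowed if both cubes were close to `x`.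
theorem nearCubes_subsingleton (x : Rd d) : (nearCubes x).Subsingleton := by
  intro k hk k' hk'
  by_contra hne
  wlog hlt : k < k' generalizing k k'
  · exact this hk' hk (Ne.symm hne) (by omega)
  obtain ⟨hk2, y, hy, hxy⟩ := hk
  obtain ⟨-, y', hy', hxy'⟩ := hk'
  have hcoord : |y 0 - y' 0| < 2 ^ k / 4 + 2 ^ k' / 4 :=
    calc |y 0 - y' 0| = ‖(y - y') 0‖ := by simp [Real.norm_eq_abs]
      _ ≤ ‖y - y'‖ := PiLp.norm_apply_le _ _
      _ ≤ ‖x - y‖ + ‖x - y'‖ := by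
          simpa only [norm_sub_rev y x] using norm_sub_le_norm_sub_add_norm_sub y x y'
      _ < _ := add_lt_add hxy hxy'
  have hradius : ∀ {j : ℕ}, 2 ≤ j → (1 : ℝ) / (2 * j) ≤ 1 / 4 := fun hj => by
    gcongr; exact_mod_cast (show 4 ≤ 2 * _ by omega)
  have hy0 := (abs_sub_apply_zero_lt_of_mem_Ck hy).trans_le (hradius hk2)
  have hy0' := (abs_sub_apply_zero_lt_of_mem_Ck hy').trans_le (hradius (hk2.trans hlt.le))
  have h2k : (4 : ℝ) ≤ 2 ^ k := by exact_mod_cast (Nat.pow_le_pow_right two_pos hk2 : 2 ^ 2 ≤ 2 ^ k)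
  have h2k' : 2 * (2 : ℝ) ^ k ≤ 2 ^ k' := by
    rw [← pow_succ']; exact pow_le_pow_right₀ one_le_two hlt
  rw [abs_lt] at hcoord hy0 hy0'
  linarith [hcoord.1, hcoord.2, hy0.1, hy0.2, hy0'.1, hy0'.2]

theorem lintegral_ofReal_potV_mul_le {g : Rd d → ℝ} (hg : Measurable g) (hg0 : 0 ≤ g) :
    ∫⁻ y, ENNReal.ofReal (potV d y * g y) ≤
      ∑' k : ℕ, if 2 ≤ k then ENNReal.ofReal ((k : ℝ) ^ 2) * ∫⁻ y in Ck d k, ENNReal.ofReal (g y)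
        else 0 := by
  have hCk : ∀ k, MeasurableSet (Ck d k) := fun k => measurableSet_cubeSet _ _
  have hgm : Measurable fun y => ENNReal.ofReal (g y) := hg.ennreal_ofReal
  have hpointwise : ∀ y, ENNReal.ofReal (potV d y * g y) ≤ ∑' k : ℕ,
      if 2 ≤ k then
        ENNReal.ofReal ((k : ℝ) ^ 2) * (Ck d k).indicator (fun y => ENNReal.ofReal (g y)) y
      else 0 := by
    intro y
    rw [potV, ← tsum_mul_right]
    refine (ENNReal.ofReal_tsum_le_tsum_ofReal fun k => ?_).trans_eq (tsum_congr fun k => ?_)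
    · refine mul_nonneg ?_ (hg0 y)
      split_ifs
      exacts [mul_nonneg (sq_nonneg _) (Set.indicator_nonneg (fun _ _ => zero_le_one) _), le_rfl]
    · by_cases hy : y ∈ Ck d k <;> split_ifs <;> simp [hy, ENNReal.ofReal_mul (sq_nonneg _)]
  calc ∫⁻ y, ENNReal.ofReal (potV d y * g y)
      ≤ ∫⁻ y, ∑' k : ℕ, if 2 ≤ k then
          ENNReal.ofReal ((k : ℝ) ^ 2) * (Ck d k).indicator (fun y => ENNReal.ofReal (g y)) y
          else 0 := lintegral_mono hpointwise
    _ = _ := by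
        rw [lintegral_tsum fun k => by
          split_ifs
          exacts [((hgm.indicator (hCk k)).const_mul _).aemeasurable, aemeasurable_const]]
        refine tsum_congr fun k => ?_
        split_ifs
        · rw [lintegral_const_mul _ (hgm.indicator (hCk k)), lintegral_indicator (hCk k)]
        · exact lintegral_zero

end Potential

def kernelMassUnitBall (d : ℕ) : ℝ≥0∞ :=
  ∫⁻ y in ball (0 : Rd d) 1, ENNReal.ofReal (‖y‖ ^ ((2 : ℝ) - d))

section LocalBounds

variable {d : ℕ} [NeZero d]

theorem kernelMassUnitBall_lt_top : kernelMassUnitBall d < ⊤ :=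
  setLIntegral_ball_norm_rpow_lt_top volume
    (by rw [finrank_euclideanSpace_fin]; exact NeZero.one_le) (by simp)

theorem ofReal_sq_mul_setLIntegral_Ck_le (hd : 2 ≤ d) (x : Rd d) {k : ℕ} (hk : 0 < k) :
    ENNReal.ofReal ((k : ℝ) ^ 2) * ∫⁻ y in Ck d k, ENNReal.ofReal (‖x - y‖ ^ ((2 : ℝ) - d)) ≤
      kernelMassUnitBall d + 1 := by
  set ρ : ℝ := (k : ℝ)⁻¹
  have hρ : 0 < ρ := by positivity
  have hs : (2 : ℝ) - d ≤ 0 := by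
    have : (2 : ℝ) ≤ d := by exact_mod_cast hd
    linarith
  have hball := (setLIntegral_ball_comp_sub_left volume
    (fun y => ENNReal.ofReal (‖y‖ ^ ((2 : ℝ) - d))) x ρ).trans
      (setLIntegral_ball_zero_norm_rpow volume hρ ((2 : ℝ) - d))
  rw [finrank_euclideanSpace_fin, sub_add_cancel] at hball
  have hsplit := setLIntegral_norm_sub_rpow_le volume x (Ck d k) hρ hs
  rw [hball, volume_Ck] at hsplit
  have hkρ : (k : ℝ) ^ 2 * ρ ^ (2 : ℝ) = 1 := by
    rw [Real.rpow_two, ← mul_pow, mul_inv_cancel₀ (by positivity), one_pow]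
  have hkρ' : (k : ℝ) ^ 2 * (ρ ^ ((2 : ℝ) - d) * ρ ^ d) = 1 := by
    rw [← Real.rpow_natCast ρ d, ← Real.rpow_add hρ, sub_add_cancel, hkρ]
  calc ENNReal.ofReal ((k : ℝ) ^ 2) * ∫⁻ y in Ck d k, ENNReal.ofReal (‖x - y‖ ^ ((2 : ℝ) - d))
      ≤ ENNReal.ofReal ((k : ℝ) ^ 2) * (ENNReal.ofReal (ρ ^ (2 : ℝ)) * kernelMassUnitBall d +
          ENNReal.ofReal (ρ ^ ((2 : ℝ) - d)) * ENNReal.ofReal (ρ ^ d)) := by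
        gcongr; exact hsplit
    _ = ENNReal.ofReal ((k : ℝ) ^ 2 * ρ ^ (2 : ℝ)) * kernelMassUnitBall d +
          ENNReal.ofReal ((k : ℝ) ^ 2 * (ρ ^ ((2 : ℝ) - d) * ρ ^ d)) := by
        rw [mul_add, ← mul_assoc, ENNReal.ofReal_mul (by positivity),
          ENNReal.ofReal_mul (by positivity), ENNReal.ofReal_mul (by positivity)]
    _ = kernelMassUnitBall d + 1 := by rw [hkρ, hkρ', ENNReal.ofReal_one, one_mul]

theorem ofReal_sq_mul_setLIntegral_Ck_le_of_notMem_nearCubes (hd : 3 ≤ d) {x : Rd d} {k : ℕ}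
    (hk : 2 ≤ k) (hx : k ∉ nearCubes x) :
    ENNReal.ofReal ((k : ℝ) ^ 2) * ∫⁻ y in Ck d k, ENNReal.ofReal (‖x - y‖ ^ ((2 : ℝ) - d)) ≤
      ENNReal.ofReal (4 * (1 / 2) ^ k) := by
  set R : ℝ := 2 ^ k / 4
  have hR : 1 ≤ R := by
    have : (4 : ℝ) ≤ 2 ^ k := by
      exact_mod_cast (Nat.pow_le_pow_right two_pos hk : 2 ^ 2 ≤ 2 ^ k)
    simp only [R]; linarith
  have hd' : (3 : ℝ) ≤ d := by exact_mod_cast hd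
  have hfar : ∀ y ∈ Ck d k, R ≤ ‖x - y‖ := fun y hy => not_lt.1 fun h => hx ⟨hk, y, hy, h⟩
  have hI := setLIntegral_norm_sub_rpow_le_of_le_norm volume x (by positivity)
    (by linarith : (2 : ℝ) - d ≤ 0) hfar
  rw [volume_Ck] at hI
  have hkd : (k : ℝ) ^ 2 * (k : ℝ)⁻¹ ^ d ≤ 1 := by
    have hk1 : (k : ℝ)⁻¹ ≤ 1 := inv_le_one_of_one_le₀ (by exact_mod_cast (one_le_two.trans hk))
    calc (k : ℝ) ^ 2 * (k : ℝ)⁻¹ ^ d ≤ (k : ℝ) ^ 2 * (k : ℝ)⁻¹ ^ 2 :=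
          mul_le_mul_of_nonneg_left (pow_le_pow_of_le_one (by positivity) hk1 (by omega))
            (by positivity)
      _ = 1 := by rw [← mul_pow, mul_inv_cancel₀ (by positivity), one_pow]
  have hRs : R ^ ((2 : ℝ) - d) ≤ R ^ (-1 : ℝ) :=
    Real.rpow_le_rpow_of_exponent_le hR (by linarith)
  calc ENNReal.ofReal ((k : ℝ) ^ 2) * ∫⁻ y in Ck d k, ENNReal.ofReal (‖x - y‖ ^ ((2 : ℝ) - d))
      ≤ ENNReal.ofReal ((k : ℝ) ^ 2) *
          (ENNReal.ofReal (R ^ ((2 : ℝ) - d)) * ENNReal.ofReal ((k : ℝ)⁻¹ ^ d)) := by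
        gcongr
    _ = ENNReal.ofReal ((k : ℝ) ^ 2 * (k : ℝ)⁻¹ ^ d * R ^ ((2 : ℝ) - d)) := by
        rw [← ENNReal.ofReal_mul (by positivity), ← ENNReal.ofReal_mul (by positivity)]
        ring_nf
    _ ≤ ENNReal.ofReal (1 * R ^ (-1 : ℝ)) :=
        ENNReal.ofReal_le_ofReal (mul_le_mul hkd hRs (by positivity) zero_le_one)
    _ = ENNReal.ofReal (4 * (1 / 2) ^ k) := by
        rw [one_mul, Real.rpow_neg_one, inv_div, one_div, inv_pow, div_eq_mul_inv]

theorem ofReal_sq_mul_setLIntegral_Ck_le_indicator_add (hd : 3 ≤ d) (x : Rd d) {k : ℕ}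
    (hk : 2 ≤ k) :
    ENNReal.ofReal ((k : ℝ) ^ 2) * ∫⁻ y in Ck d k, ENNReal.ofReal (‖x - y‖ ^ ((2 : ℝ) - d)) ≤
      (nearCubes x).indicator (fun _ => kernelMassUnitBall d + 1) k +
        ENNReal.ofReal (4 * (1 / 2) ^ k) := by
  by_cases hx : k ∈ nearCubes x
  · rw [Set.indicator_of_mem hx]
    exact le_add_right (ofReal_sq_mul_setLIntegral_Ck_le (by omega) x (by omega))
  · rw [Set.indicator_of_notMem hx, zero_add]
    exact ofReal_sq_mul_setLIntegral_Ck_le_of_notMem_nearCubes hd hk hx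

end LocalBounds

/-- the potential `𝒱` satisfies the global Kato condition (S):
`sup_{x ∈ ℝ^d} ∫ 𝒱(y) |x - y|^{2-d} dy < ∞`. -/
theorem statement0 (d : ℕ) [NeZero d] (hd : 3 ≤ d) :
    ∃ M : ℝ≥0∞, M ≠ ⊤ ∧ ∀ x : Rd d,
      (∫⁻ y, ENNReal.ofReal (potV d y * ‖x - y‖ ^ ((2 : ℝ) - (d : ℝ))) ∂volume) ≤ M := by
  refine ⟨kernelMassUnitBall d + 1 + ENNReal.ofReal 8, by
    simp [kernelMassUnitBall_lt_top.ne], fun x => ?_⟩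
  have hterm : ∀ k : ℕ,
      (if 2 ≤ k then ENNReal.ofReal ((k : ℝ) ^ 2) *
        ∫⁻ y in Ck d k, ENNReal.ofReal (‖x - y‖ ^ ((2 : ℝ) - d)) else 0) ≤
      (nearCubes x).indicator (fun _ => kernelMassUnitBall d + 1) k +
        ENNReal.ofReal (4 * (1 / 2) ^ k) := by
    intro k
    split_ifs with hk
    exacts [ofReal_sq_mul_setLIntegral_Ck_le_indicator_add hd x hk, zero_le]
  have hgeom : ∑' k : ℕ, ENNReal.ofReal (4 * (1 / 2) ^ k) = ENNReal.ofReal 8 := by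
    rw [← ENNReal.ofReal_tsum_of_nonneg (fun _ => by positivity)
      (summable_geometric_two.mul_left 4), tsum_mul_left, tsum_geometric_two]
    norm_num
  calc ∫⁻ y, ENNReal.ofReal (potV d y * ‖x - y‖ ^ ((2 : ℝ) - d))
      ≤ ∑' k : ℕ, if 2 ≤ k then ENNReal.ofReal ((k : ℝ) ^ 2) *
          ∫⁻ y in Ck d k, ENNReal.ofReal (‖x - y‖ ^ ((2 : ℝ) - d)) else 0 :=
        lintegral_ofReal_potV_mul_le (by fun_prop) fun y => Real.rpow_nonneg (norm_nonneg _) _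
    _ ≤ ∑' k : ℕ, ((nearCubes x).indicator (fun _ => kernelMassUnitBall d + 1) k +
          ENNReal.ofReal (4 * (1 / 2) ^ k)) := ENNReal.tsum_le_tsum hterm
    _ ≤ kernelMassUnitBall d + 1 + ENNReal.ofReal 8 := by
        rw [ENNReal.tsum_add, hgeom]
        gcongr
        exact ENNReal.tsum_indicator_const_le_of_subsingleton (nearCubes_subsingleton x) _
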